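/- arXiv:2402.00105 — 5 statements merged into one kernel-verified Lean document; each statement's English description precedes it below -/
import Mathlib

section
/- Let A be a finite commutative hypergroup: a finite set with involution x ↦ x̄, a distinguished identity e, and nonnegative real structure constants N_{xy}^z making ℝA an associative commutative algebra with unit e, such that N_{xy}^e ≠ 0 iff y = x̄. Suppose elements x₁,…,x_{n+1} satisfy e ≺ x₁⋯x_{n+1} (the coefficient of e in the product is positive), and elements y₁,…,y_m satisfy e ≺ y₁⋯y_m·x̄_{n+1}. Then e ≺ x₁⋯xₙ·y₁⋯y_m. -/
/-! Since `N u a e` vanishes unless `u = ā`, the coefficient of `e` in `w · a` is the coefficient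
of `ā` in `w` times `N ā a e > 0`. So the hypotheses say `x̄ ≺ x₁ ⋯ xₙ` and `x ≺ y₁ ⋯ y_m`, and
since all coefficients are nonnegative, the positive term `N x̄ x e` of their product survives in
the coefficient of `e` in `x₁ ⋯ xₙ · y₁ ⋯ y_m`. -/

/-- A finite hypergroup: a finite basis set with involution `inv`, identity `e`,
and nonnegative real structure constants `N x y z` (the coefficient of `z` in
the product `x·y`) making ℝA an associative unital algebra, with the involution
an anti-automorphism, and with `N x y e ≠ 0` iff `y = inv x`. -/
structure Hypergroup (A : Type) [Fintype A] [DecidableEq A] where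
  N : A → A → A → ℝ
  e : A
  inv : A → A
  N_nonneg : ∀ x y z, 0 ≤ N x y z
  inv_inv : ∀ x, inv (inv x) = x
  one_mul : ∀ x z, N e x z = if z = x then 1 else 0
  mul_one : ∀ x z, N x e z = if z = x then 1 else 0
  assoc : ∀ x y z w, ∑ u, N x y u * N u z w = ∑ u, N y z u * N x u w
  inv_anti : ∀ x y z, N (inv y) (inv x) (inv z) = N x y z
  dual : ∀ x y, N x y e ≠ 0 ↔ y = inv x

namespace Hypergroup

variable {A : Type} [Fintype A] [DecidableEq A]

/-- The coefficient of a basis element `z` in the product `x₁ ⋯ xₙ` of a list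
of basis elements (the empty product being the identity `e`). -/
def coeff (H : Hypergroup A) : List A → A → ℝ
  | [], z => if z = H.e then 1 else 0
  | x :: l, z => ∑ y, H.coeff l y * H.N x y z

end Hypergroup

namespace Hypergroup

open Finset

variable {A : Type} [Fintype A] [DecidableEq A] (H : Hypergroup A)

lemma coeff_nonneg : ∀ (l : List A) (z : A), 0 ≤ H.coeff l z
  | [], z => by unfold coeff; split_ifs <;> norm_num
  | x :: l, z => sum_nonneg fun y _ => mul_nonneg (coeff_nonneg l y) (H.N_nonneg x y z)

lemma coeff_append (l₁ l₂ : List A) (z : A) :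
    H.coeff (l₁ ++ l₂) z = ∑ u, ∑ v, H.coeff l₁ u * H.coeff l₂ v * H.N u v z := by
  induction l₁ generalizing z with
  | nil => simp [coeff, H.one_mul]
  | cons x l₁ ih =>
    calc H.coeff (x :: l₁ ++ l₂) z
        = ∑ u, ∑ v, H.coeff l₁ u * H.coeff l₂ v * ∑ y, H.N u v y * H.N x y z := by
          simp_rw [List.cons_append, coeff, ih, sum_mul, mul_sum]
          refine sum_comm.trans (sum_congr rfl fun _ _ => sum_comm.trans ?_)
          exact sum_congr rfl fun _ _ => sum_congr rfl fun _ _ => by ring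
      _ = ∑ u, ∑ v, H.coeff l₁ u * H.coeff l₂ v * ∑ w, H.N x u w * H.N w v z := by
          simp_rw [H.assoc]
      _ = ∑ w, ∑ v, (∑ u, H.coeff l₁ u * H.N x u w) * H.coeff l₂ v * H.N w v z := by
          simp_rw [mul_sum, sum_mul]
          refine (sum_congr rfl fun _ _ => sum_comm).trans (sum_comm.trans ?_)
          refine sum_congr rfl fun _ _ => sum_comm.trans ?_
          exact sum_congr rfl fun _ _ => sum_congr rfl fun _ _ => by ring

lemma coeff_singleton (a z : A) : H.coeff [a] z = if z = a then 1 else 0 := by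
  simp [coeff, H.mul_one]

lemma coeff_append_singleton (l : List A) (a z : A) :
    H.coeff (l ++ [a]) z = ∑ u, H.coeff l u * H.N u a z := by
  simp [coeff_append, coeff_singleton]

lemma N_inv_self_pos (a : A) : 0 < H.N (H.inv a) a H.e :=
  (H.N_nonneg _ _ _).lt_of_ne' ((H.dual _ _).mpr (H.inv_inv a).symm)

lemma coeff_append_singleton_e (l : List A) (a : A) :
    H.coeff (l ++ [a]) H.e = H.coeff l (H.inv a) * H.N (H.inv a) a H.e := by
  rw [coeff_append_singleton, sum_eq_single (H.inv a)]
  · intro u _ hu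
    rw [not_ne_iff.mp (mt (H.dual u a).mp fun ha => hu (by rw [ha, H.inv_inv])), mul_zero]
  · simp

lemma coeff_inv_pos_of_coeff_append_singleton_pos {l : List A} {a : A}
    (h : 0 < H.coeff (l ++ [a]) H.e) : 0 < H.coeff l (H.inv a) := by
  rw [coeff_append_singleton_e] at h
  exact pos_of_mul_pos_left h (H.N_nonneg _ _ _)

lemma mul_le_coeff_append (l₁ l₂ : List A) (u v z : A) :
    H.coeff l₁ u * H.coeff l₂ v * H.N u v z ≤ H.coeff (l₁ ++ l₂) z := by
  have hnonneg : ∀ u v, 0 ≤ H.coeff l₁ u * H.coeff l₂ v * H.N u v z := fun u v =>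
    mul_nonneg (mul_nonneg (H.coeff_nonneg _ _) (H.coeff_nonneg _ _)) (H.N_nonneg _ _ _)
  rw [coeff_append]
  exact (single_le_sum (fun v _ => hnonneg u v) (mem_univ v)).trans
    (single_le_sum (fun u _ => sum_nonneg fun v _ => hnonneg u v) (mem_univ u))

end Hypergroup

open Finset in
theorem stmt_10_general {A : Type} [Fintype A] [DecidableEq A] (H : Hypergroup A)
    (xs : List A) (x : A) (ys : List A)
    (h1 : 0 < H.coeff (xs ++ [x]) H.e)
    (h2 : 0 < H.coeff (ys ++ [H.inv x]) H.e) :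
    0 < H.coeff (xs ++ ys) H.e := by
  have hxs : 0 < H.coeff xs (H.inv x) := H.coeff_inv_pos_of_coeff_append_singleton_pos h1
  have hys : 0 < H.coeff ys x := by
    simpa only [H.inv_inv] using H.coeff_inv_pos_of_coeff_append_singleton_pos h2
  exact (mul_pos (mul_pos hxs hys) (H.N_inv_self_pos x)).trans_le
    (H.mul_le_coeff_append _ _ _ _ _)

open Finset in
/-- Gluing lemma for commutative hypergroups: if e ≺ x₁⋯xₙ·x and
e ≺ y₁⋯y_m·x̄, then e ≺ x₁⋯xₙ·y₁⋯y_m. -/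
theorem stmt_10 {A : Type} [Fintype A] [DecidableEq A] (H : Hypergroup A)
    (hcomm : ∀ x y z, H.N x y z = H.N y x z)
    (xs : List A) (x : A) (ys : List A)
    (h1 : 0 < H.coeff (xs ++ [x]) H.e)
    (h2 : 0 < H.coeff (ys ++ [H.inv x]) H.e) :
    0 < H.coeff (xs ++ ys) H.e :=
  stmt_10_general H xs x ys h1 h2
end

section
/- Let A be a finite hypergroup and let d: ℝA → ℝ be the linear extension of assigning to each basis element x its Perron–Frobenius eigenvalue d_x of the left-multiplication operator ℓ_x on ℝA. Then d is a ring homomorphism: d_{xy} = d_x d_y, i.e., d_x d_y = Σ_z N_{xy}^z d_z for all basis elements x, y. -/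
/-!
Right multiplication by `s = ∑ t, t` has a strictly positive matrix, so by Perron–Frobenius it
has a positive eigenvector `R` whose eigenspace is a line. Every left multiplication `ℓ_x`
commutes with it, hence preserves that line: `R` is a common eigenvector of all `ℓ_x`. A
nonnegative matrix has at most one eigenvalue with a positive eigenvector, so `ℓ_x R = d_x R`,
and applying `ℓ_x ℓ_y = ∑ z, N_{xy}^z ℓ_z` to `R` gives the claim.
-/

open Finset Matrix

section PositiveMatrix

variable {m n : Type*} [Fintype n]

lemma exists_smul_le_and_eq [Nonempty n] {R : n → ℝ} (hR : ∀ i, 0 < R i) (u : n → ℝ) :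
    ∃ t : ℝ, t • R ≤ u ∧ ∃ i, u i = t * R i := by
  obtain ⟨i, -, hi⟩ := exists_min_image univ (fun i => u i / R i) univ_nonempty
  refine ⟨u i / R i, fun j => ?_, i, (div_mul_cancel₀ _ (hR i).ne').symm⟩
  exact (le_div_iff₀ (hR j)).mp (hi j (mem_univ j))

lemma mulVec_nonneg_of_nonneg {M : Matrix m n ℝ} (hM : ∀ i j, 0 ≤ M i j) {v : n → ℝ}
    (hv : 0 ≤ v) : 0 ≤ M *ᵥ v :=
  fun i => sum_nonneg fun j _ => mul_nonneg (hM i j) (hv j)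

lemma mulVec_pos_of_pos {M : Matrix m n ℝ} (hM : ∀ i j, 0 < M i j) {v : n → ℝ} (hv : 0 ≤ v)
    (hv0 : v ≠ 0) (i : m) : 0 < (M *ᵥ v) i := by
  obtain ⟨j, hj⟩ := Function.ne_iff.mp hv0
  exact sum_pos' (fun k _ => mul_nonneg (hM i k).le (hv k))
    ⟨j, mem_univ j, mul_pos (hM i j) ((hv j).lt_of_ne' hj)⟩

lemma ne_zero_of_mem_stdSimplex {v : n → ℝ} (hv : v ∈ stdSimplex ℝ n) : v ≠ 0 :=
  fun h => by simpa [h] using hv.2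

variable {M : Matrix n n ℝ}

lemma le_sum_sum_of_smul_le (hM : ∀ i j, 0 ≤ M i j) {v : n → ℝ} (hv : v ∈ stdSimplex ℝ n)
    {r : ℝ} (hr : r • v ≤ M *ᵥ v) : r ≤ ∑ i, ∑ j, M i j :=
  calc r = ∑ i, r * v i := by rw [← mul_sum, hv.2, mul_one]
    _ ≤ ∑ i, (M *ᵥ v) i := sum_le_sum fun i _ => hr i
    _ ≤ ∑ i, ∑ j, M i j := sum_le_sum fun i _ => sum_le_sum fun j _ =>
      mul_le_of_le_one_right (hM i j) (mem_Icc_of_mem_stdSimplex hv j).2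

variable [Nonempty n]

lemma le_of_mulVec_eq_smul_of_pos (hM : ∀ i j, 0 ≤ M i j) {v R : n → ℝ} {a b : ℝ}
    (hv : ∀ i, 0 < v i) (hR : ∀ i, 0 < R i) (hMv : M *ᵥ v = a • v) (hMR : M *ᵥ R = b • R) :
    b ≤ a := by
  obtain ⟨t, hle, i, hi⟩ := exists_smul_le_and_eq hR v
  have h := mulVec_nonneg_of_nonneg hM (sub_nonneg.mpr hle) i
  rw [mulVec_sub, mulVec_smul, hMv, hMR] at h
  have h' : b * v i ≤ a * v i := by
    simpa [hi, sub_nonneg, mul_left_comm b t] using h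
  exact le_of_mul_le_mul_right h' (hv i)

lemma eigenvalue_eq_of_pos (hM : ∀ i j, 0 ≤ M i j) {v R : n → ℝ} {a b : ℝ}
    (hv : ∀ i, 0 < v i) (hR : ∀ i, 0 < R i) (hMv : M *ᵥ v = a • v) (hMR : M *ᵥ R = b • R) :
    a = b :=
  le_antisymm (le_of_mulVec_eq_smul_of_pos hM hR hv hMR hMv)
    (le_of_mulVec_eq_smul_of_pos hM hv hR hMv hMR)

lemma eq_smul_of_mulVec_eq_smul (hM : ∀ i j, 0 < M i j) {R u : n → ℝ} {r : ℝ}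
    (hR : ∀ i, 0 < R i) (hMR : M *ᵥ R = r • R) (hMu : M *ᵥ u = r • u) :
    ∃ t : ℝ, u = t • R := by
  obtain ⟨t, hle, i, hi⟩ := exists_smul_le_and_eq hR u
  refine ⟨t, by_contra fun hne => ?_⟩
  have h := mulVec_pos_of_pos hM (sub_nonneg.mpr hle) (sub_ne_zero.mpr hne) i
  rw [mulVec_sub, mulVec_smul, hMR, hMu] at h
  simp [hi, mul_left_comm r t] at h

lemma exists_smul_le_of_smul_le_of_ne (hM : ∀ i j, 0 < M i j) {v : n → ℝ}
    (hv : v ∈ stdSimplex ℝ n) {r : ℝ} (hr : r • v ≤ M *ᵥ v) (hne : M *ᵥ v ≠ r • v) :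
    ∃ ε > 0, ∃ w ∈ stdSimplex ℝ n, (r + ε) • w ≤ M *ᵥ w := by
  -- `M (M v - r v)` is strictly positive, so `M v` is a subeigenvector for a value larger than `r`.
  have hgap : ∀ i, 0 < (M *ᵥ (M *ᵥ v) - r • M *ᵥ v) i := by
    simpa only [mulVec_sub, mulVec_smul] using
      mulVec_pos_of_pos hM (sub_nonneg.mpr hr) (sub_ne_zero.mpr hne)
  set w₀ := M *ᵥ v
  have hw₀ : ∀ i, 0 < w₀ i := mulVec_pos_of_pos hM hv.1 (ne_zero_of_mem_stdSimplex hv)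
  obtain ⟨ε, hε, i, hi⟩ := exists_smul_le_and_eq hw₀ (M *ᵥ w₀ - r • w₀)
  have hsum : 0 < ∑ i, w₀ i := sum_pos (fun i _ => hw₀ i) univ_nonempty
  refine ⟨ε, ?_, (∑ i, w₀ i)⁻¹ • w₀, ⟨fun j => ?_, ?_⟩, ?_⟩
  · exact pos_of_mul_pos_left (hi ▸ hgap i) (hw₀ i).le
  · exact mul_nonneg (inv_nonneg.mpr hsum.le) (hw₀ j).le
  · simp [← mul_sum, inv_mul_cancel₀ hsum.ne']
  · rw [smul_comm, mulVec_smul]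
    refine smul_le_smul_of_nonneg_left ?_ (inv_nonneg.mpr hsum.le)
    rw [add_smul]
    exact le_sub_iff_add_le'.mp hε

lemma exists_pos_eigenvector (hM : ∀ i j, 0 < M i j) :
    ∃ R : n → ℝ, (∀ i, 0 < R i) ∧ ∃ r : ℝ, M *ᵥ R = r • R := by
  -- Collatz–Wielandt: a pair `(r, v)` maximizing `r` over `S` has `M v = r v`.
  set S := (Set.Icc 0 (∑ i, ∑ j, M i j) ×ˢ stdSimplex ℝ n) ∩ {p | p.1 • p.2 ≤ M *ᵥ p.2}
  have hS : IsCompact S := (isCompact_Icc.prod (isCompact_stdSimplex ℝ n)).inter_right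
    (isClosed_le (by fun_prop) (by fun_prop))
  classical
  obtain ⟨i⟩ := ‹Nonempty n›
  have hsingle := single_mem_stdSimplex ℝ i
  have hS₀ : ((0 : ℝ), (Pi.single i 1 : n → ℝ)) ∈ S := by
    refine ⟨⟨⟨le_rfl, sum_nonneg fun i _ => sum_nonneg fun j _ => (hM i j).le⟩, hsingle⟩, ?_⟩
    simpa using mulVec_nonneg_of_nonneg (fun i j => (hM i j).le) hsingle.1
  obtain ⟨⟨r, v⟩, ⟨⟨hr, hv⟩, hrv⟩, hmax⟩ := hS.exists_isMaxOn ⟨_, hS₀⟩ continuous_fst.continuousOn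
  by_cases heq : M *ᵥ v = r • v
  · exact ⟨M *ᵥ v, mulVec_pos_of_pos hM hv.1 (ne_zero_of_mem_stdSimplex hv), r,
      (congrArg (M *ᵥ ·) heq).trans (mulVec_smul M r v)⟩
  obtain ⟨ε, hε, w, hw, hrw⟩ := exists_smul_le_of_smul_le_of_ne hM hv hrv heq
  have hmem : (r + ε, w) ∈ S :=
    ⟨⟨⟨by linarith [hr.1], le_sum_sum_of_smul_le (fun i j => (hM i j).le) hw hrw⟩, hw⟩, hrw⟩
  linarith [show r + ε ≤ r from hmax hmem]

lemma exists_mulVec_eq_smul_of_commute (hM : ∀ i j, 0 < M i j) {L : Matrix n n ℝ}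
    (hLM : Commute L M) {R : n → ℝ} {r : ℝ} (hR : ∀ i, 0 < R i) (hMR : M *ᵥ R = r • R) :
    ∃ t : ℝ, L *ᵥ R = t • R :=
  eq_smul_of_mulVec_eq_smul hM hR hMR <| by
    rw [mulVec_mulVec, ← hLM.eq, ← mulVec_mulVec, hMR, mulVec_smul]

end PositiveMatrix

namespace Hypergroup

variable {A : Type} [Fintype A] [DecidableEq A] (H : Hypergroup A)

def lmul (x : A) : Matrix A A ℝ := of fun z y => H.N x y z

def rmul (t : A) : Matrix A A ℝ := of fun z y => H.N y t z

lemma lmul_nonneg (x : A) : ∀ z y, 0 ≤ H.lmul x z y := fun z y => H.N_nonneg x y z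

lemma lmul_mul_lmul (x y : A) : H.lmul x * H.lmul y = ∑ u, H.N x y u • H.lmul u := by
  ext w z
  simp only [lmul, mul_apply, of_apply, Matrix.sum_apply, Matrix.smul_apply, smul_eq_mul]
  rw [H.assoc x y z w]
  exact sum_congr rfl fun u _ => mul_comm _ _

lemma commute_lmul_rmul (x t : A) : Commute (H.lmul x) (H.rmul t) := by
  ext a b
  simp only [lmul, rmul, mul_apply, of_apply]
  calc ∑ u, H.N x u a * H.N b t u = ∑ u, H.N b t u * H.N x u a :=
        sum_congr rfl fun u _ => mul_comm _ _
    _ = ∑ u, H.N x b u * H.N u t a := (H.assoc x b t a).symm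
    _ = ∑ u, H.N u t a * H.N x b u := sum_congr rfl fun u _ => mul_comm _ _

/-- `a` occurs in `(b b̄) a` through the term `e a`; associativity moves it into `b (b̄ a)`. -/
lemma exists_N_pos (b a : A) : ∃ t, 0 < H.N b t a := by
  have hc : 0 < H.N b (H.inv b) H.e :=
    (H.N_nonneg _ _ _).lt_of_ne' ((H.dual b (H.inv b)).2 rfl)
  have hlhs : 0 < ∑ u, H.N b (H.inv b) u * H.N u a a :=
    sum_pos' (fun u _ => mul_nonneg (H.N_nonneg _ _ _) (H.N_nonneg _ _ _))
      ⟨H.e, mem_univ _, by simpa [H.one_mul] using hc⟩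
  rw [H.assoc] at hlhs
  obtain ⟨t, -, ht⟩ := exists_ne_zero_of_sum_ne_zero hlhs.ne'
  exact ⟨t, (H.N_nonneg _ _ _).lt_of_ne' (right_ne_zero_of_mul ht)⟩

lemma sum_rmul_pos (a b : A) : 0 < (∑ t, H.rmul t) a b := by
  obtain ⟨t, ht⟩ := H.exists_N_pos b a
  rw [Matrix.sum_apply]
  exact sum_pos' (fun t _ => H.N_nonneg b t a) ⟨t, mem_univ t, ht⟩

lemma commute_lmul_sum_rmul (x : A) : Commute (H.lmul x) (∑ t, H.rmul t) :=
  Commute.sum_right _ _ _ fun t _ => H.commute_lmul_rmul x t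

end Hypergroup

open Finset in
/-- The quantum dimension is a ring homomorphism: if each `d x` is the
Perron–Frobenius eigenvalue of left multiplication by `x` (characterized by
having an eigenvector with all entries positive), then d_x d_y = Σ_z N_{xy}^z d_z. -/
theorem stmt_13 {A : Type} [Fintype A] [DecidableEq A] (H : Hypergroup A)
    (d : A → ℝ)
    (hd : ∀ x, ∃ v : A → ℝ, (∀ a, 0 < v a) ∧
      ∀ z, (∑ y, H.N x y z * v y) = d x * v z) :
    ∀ x y, d x * d y = ∑ z, H.N x y z * d z := by
  intro x y
  have : Nonempty A := ⟨x⟩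
  obtain ⟨R, hR, r, hMR⟩ := exists_pos_eigenvector H.sum_rmul_pos
  have hlmulR : ∀ z, H.lmul z *ᵥ R = d z • R := fun z => by
    obtain ⟨t, ht⟩ :=
      exists_mulVec_eq_smul_of_commute H.sum_rmul_pos (H.commute_lmul_sum_rmul z) hR hMR
    obtain ⟨v, hv, hvd⟩ := hd z
    rwa [eigenvalue_eq_of_pos (H.lmul_nonneg z) hv hR (funext hvd) ht]
  have hR0 : R ≠ 0 := fun h => (hR x).ne' (congrFun h x)
  refine smul_left_injective ℝ hR0 ?_
  calc (d x * d y) • R = H.lmul x *ᵥ H.lmul y *ᵥ R := by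
        rw [hlmulR, mulVec_smul, hlmulR, smul_smul, mul_comm]
    _ = (∑ z, H.N x y z • H.lmul z) *ᵥ R := by rw [mulVec_mulVec, H.lmul_mul_lmul]
    _ = (∑ z, H.N x y z * d z) • R := by
        simp only [sum_mulVec, smul_mulVec, hlmulR, smul_smul, sum_smul]
end

section
/- Let A be a finite hypergroup. Then w_x = w_{x̄} for every basis element x, where w_x := N_{x x̄}^e. -/
namespace HGaux

variable {A : Type} [Fintype A] [DecidableEq A] (H : Hypergroup A)

/-- w_x := N x x̄ e. -/
noncomputable def w (x : A) : ℝ := H.N x (H.inv x) H.e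

lemma w_pos (x : A) : 0 < w H x :=
  lt_of_le_of_ne (H.N_nonneg _ _ _) (Ne.symm ((H.dual x (H.inv x)).mpr rfl))

/-- key identity from associativity evaluated at e. -/
lemma star_id (x y z : A) :
    H.N x y (H.inv z) * w H (H.inv z) = H.N y z (H.inv x) * w H x := by
  have h := H.assoc x y z H.e
  rw [Finset.sum_eq_single (H.inv z) (fun u _ hu => ?_) (fun hu => absurd (Finset.mem_univ _) hu),
      Finset.sum_eq_single (H.inv x) (fun u _ hu => ?_) (fun hu => absurd (Finset.mem_univ _) hu)] at h
  · simpa [w, H.inv_inv] using h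
  · -- N x u e = 0 for u ≠ inv x
    have : H.N x u H.e = 0 := by
      by_contra hne
      exact hu ((H.dual x u).mp hne)
    rw [this, mul_zero]
  · -- N u z e = 0 for u ≠ inv z
    have : H.N u z H.e = 0 := by
      by_contra hne
      have hz := (H.dual u z).mp hne
      exact hu (by rw [hz, H.inv_inv])
    rw [this, mul_zero]

/-- star identity in the form N a b c * w c = N b c̄ ā * w a. -/
lemma star_id' (a b c : A) :
    H.N a b c * w H c = H.N b (H.inv c) (H.inv a) * w H a := by
  have := star_id H a b (H.inv c)
  rwa [H.inv_inv] at this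

lemma mul_rel {a b c : A} (h : H.N a b c ≠ 0) :
    w H c * w H (H.inv a) * w H (H.inv b) = w H a * w H b * w H (H.inv c) := by
  set t1 := H.N a b c with ht1
  set t2 := H.N b (H.inv c) (H.inv a) with ht2
  set t3 := H.N (H.inv c) a (H.inv b) with ht3
  have e1 : t1 * w H c = t2 * w H a := star_id' H a b c
  have e2 : t2 * w H (H.inv a) = t3 * w H b := by
    have := star_id' H b (H.inv c) (H.inv a)
    rwa [H.inv_inv] at this
  have e3 : t3 * w H (H.inv b) = t1 * w H (H.inv c) := by
    have := star_id' H (H.inv c) a (H.inv b)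
    rwa [H.inv_inv, H.inv_inv] at this
  have h2 : t2 ≠ 0 := by
    intro h0
    rw [h0, zero_mul] at e1
    exact mul_ne_zero h (ne_of_gt (w_pos H c)) e1
  have h3 : t3 ≠ 0 := by
    intro h0
    rw [h0, zero_mul] at e2
    exact mul_ne_zero h2 (ne_of_gt (w_pos H (H.inv a))) e2
  have big : (t1 * t2 * t3) * (w H c * w H (H.inv a) * w H (H.inv b))
      = (t1 * t2 * t3) * (w H a * w H b * w H (H.inv c)) := by
    calc (t1 * t2 * t3) * (w H c * w H (H.inv a) * w H (H.inv b))
        = (t1 * w H c) * (t2 * w H (H.inv a)) * (t3 * w H (H.inv b)) := by ring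
      _ = (t2 * w H a) * (t3 * w H b) * (t1 * w H (H.inv c)) := by rw [e1, e2, e3]
      _ = (t1 * t2 * t3) * (w H a * w H b * w H (H.inv c)) := by ring
  exact mul_left_cancel₀ (mul_ne_zero (mul_ne_zero h h2) h3) big

lemma exists_sq (a : A) : ∃ c, H.N a a c ≠ 0 := by
  by_contra hc
  push_neg at hc
  have h := H.assoc a a (H.inv a) a
  have hL : ∑ u, H.N a a u * H.N u (H.inv a) a = 0 := by
    apply Finset.sum_eq_zero
    intro u _
    rw [hc u, zero_mul]
  rw [hL] at h
  have hterm : w H a * H.N a H.e a ≤ ∑ u, H.N a (H.inv a) u * H.N a u a := by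
    apply Finset.single_le_sum (f := fun u => H.N a (H.inv a) u * H.N a u a)
      (fun u _ => mul_nonneg (H.N_nonneg _ _ _) (H.N_nonneg _ _ _)) (Finset.mem_univ H.e)
  rw [← h] at hterm
  rw [H.mul_one] at hterm
  simp at hterm
  exact absurd hterm (not_le.mpr (w_pos H a))

lemma w_le (x : A) : w H x ≤ w H (H.inv x) := by
  -- maximize r y = w y / w (inv y)
  obtain ⟨a, -, ha⟩ := Finset.exists_max_image Finset.univ
    (fun y => w H y / w H (H.inv y)) ⟨x, Finset.mem_univ x⟩
  have hmax : ∀ y, w H y / w H (H.inv y) ≤ w H a / w H (H.inv a) :=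
    fun y => ha y (Finset.mem_univ y)
  -- show r a ≤ 1
  obtain ⟨c, hc⟩ := exists_sq H a
  have hrel := mul_rel H hc
  have hwc := w_pos H c
  have hwc' := w_pos H (H.inv c)
  have hwa := w_pos H a
  have hwa' := w_pos H (H.inv a)
  have hrc : w H c / w H (H.inv c) = (w H a / w H (H.inv a))^2 := by
    field_simp
    nlinarith [hrel]
  have hra1 : w H a / w H (H.inv a) ≤ 1 := by
    have h1 : (w H a / w H (H.inv a))^2 ≤ w H a / w H (H.inv a) := hrc ▸ hmax c
    nlinarith [div_pos hwa hwa']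
  -- now for x : r x ≤ 1 and r (inv x) ≤ 1
  have hx1 : w H x / w H (H.inv x) ≤ 1 := le_trans (hmax x) hra1
  exact (div_le_one (w_pos H (H.inv x))).mp hx1

end HGaux

/-- In a finite hypergroup, w_x = w_{x̄}, i.e. N_{x x̄}^e = N_{x̄ x}^e. -/
theorem stmt_15 {A : Type} [Fintype A] [DecidableEq A] (H : Hypergroup A)
    (x : A) : H.N x (H.inv x) H.e = H.N (H.inv x) x H.e := by
  have h1 := HGaux.w_le H x
  have h2 := HGaux.w_le H (H.inv x)
  rw [H.inv_inv] at h2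
  have : HGaux.w H x = HGaux.w H (H.inv x) := le_antisymm h1 h2
  simpa [HGaux.w, H.inv_inv] using this
end

section
/- Let G be a finite strict hypergroup and H a supernormal subhypergroup, meaning x H x̄ ⊆ H for all x ∈ G (i.e., every basis element y with y ≺ x h x̄ for some h ∈ H lies in H). Then H is normal: Hx = xH for all x ∈ G, where Hx = {y : y ≺ hx for some h ∈ H} and xH = {y : y ≺ xh for some h ∈ H}. -/
namespace Hypergroup

variable {A : Type} [Fintype A] [DecidableEq A]

lemma coeff_pair (H : Hypergroup A) (b c u : A) : H.coeff [b,c] u = H.N b c u := by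
  simp [Hypergroup.coeff, H.mul_one, ite_mul]

lemma coeff_triple (H : Hypergroup A) (a b c y : A) :
    H.coeff [a,b,c] y = ∑ u, H.N b c u * H.N a u y := by
  have h : H.coeff [a,b,c] y = ∑ u, H.coeff [b,c] u * H.N a u y := rfl
  rw [h]
  simp [H.coeff_pair]

end Hypergroup

/-- A supernormal subhypergroup is normal: if x H x̄ ⊆ H for all x, then
Hx = xH for all x. -/
theorem stmt_17 {A : Type} [Fintype A] [DecidableEq A] (H : Hypergroup A)
    (hstrict : ∀ x, H.N x (H.inv x) H.e = 1)
    (S : Set A) (hne : S.Nonempty)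
    (hSinv : ∀ x ∈ S, H.inv x ∈ S)
    (hSmul : ∀ x ∈ S, ∀ y ∈ S, ∀ z, H.N x y z ≠ 0 → z ∈ S)
    (hsuper : ∀ x : A, ∀ h ∈ S, ∀ y, 0 < H.coeff [x, h, H.inv x] y → y ∈ S) :
    ∀ x : A, {y | ∃ h ∈ S, 0 < H.N h x y} = {y | ∃ h ∈ S, 0 < H.N x h y} := by
  intro x
  ext y
  simp only [Set.mem_setOf_eq]
  constructor
  · rintro ⟨h, hS, hpos⟩
    set C : A → ℝ := fun h' => ∑ u, H.N h x u * H.N (H.inv x) u h' with hCdef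
    have hCnn : ∀ h', 0 ≤ C h' := fun h' =>
      Finset.sum_nonneg fun u _ => mul_nonneg (H.N_nonneg _ _ _) (H.N_nonneg _ _ _)
    have hT : 0 < ∑ h', C h' * H.N x h' y := by
      have hswap : ∑ h', C h' * H.N x h' y
          = ∑ u, H.N h x u * ∑ h', H.N (H.inv x) u h' * H.N x h' y := by
        simp only [hCdef, Finset.sum_mul, Finset.mul_sum]
        rw [Finset.sum_comm]
        refine Finset.sum_congr rfl fun u _ => Finset.sum_congr rfl fun h' _ => by ring
      rw [hswap]
      have hinner : 1 ≤ ∑ h', H.N (H.inv x) y h' * H.N x h' y := by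
        rw [← H.assoc x (H.inv x) y y]
        have hle := Finset.single_le_sum
          (f := fun u => H.N x (H.inv x) u * H.N u y y)
          (fun u _ => mul_nonneg (H.N_nonneg _ _ _) (H.N_nonneg _ _ _))
          (Finset.mem_univ H.e)
        simpa [hstrict x, H.one_mul] using hle
      have hle2 : H.N h x y * ∑ h', H.N (H.inv x) y h' * H.N x h' y
          ≤ ∑ u, H.N h x u * ∑ h', H.N (H.inv x) u h' * H.N x h' y :=
        Finset.single_le_sum
          (f := fun u => H.N h x u * ∑ h', H.N (H.inv x) u h' * H.N x h' y)
          (fun u _ => mul_nonneg (H.N_nonneg _ _ _)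
            (Finset.sum_nonneg fun h' _ =>
              mul_nonneg (H.N_nonneg _ _ _) (H.N_nonneg _ _ _)))
          (Finset.mem_univ y)
      nlinarith [hpos, hinner, hle2]
    obtain ⟨h', -, hh'⟩ := Finset.exists_lt_of_sum_lt (s := Finset.univ)
      (f := fun _ : A => (0 : ℝ)) (g := fun h' => C h' * H.N x h' y) (by simpa using hT)
    rcases mul_pos_iff.mp hh' with ⟨hCpos, hNpos⟩ | ⟨hCneg, _⟩
    · refine ⟨h', ?_, hNpos⟩
      apply hsuper (H.inv x) h hS h'
      rw [H.inv_inv, H.coeff_triple]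
      exact hCpos
    · exact absurd hCneg (not_lt.mpr (hCnn h'))
  · rintro ⟨h, hS, hpos⟩
    set C : A → ℝ := fun h' => ∑ u, H.N x h u * H.N u (H.inv x) h' with hCdef
    have hCnn : ∀ h', 0 ≤ C h' := fun h' =>
      Finset.sum_nonneg fun u _ => mul_nonneg (H.N_nonneg _ _ _) (H.N_nonneg _ _ _)
    have hT : 0 < ∑ h', C h' * H.N h' x y := by
      have hswap : ∑ h', C h' * H.N h' x y
          = ∑ u, H.N x h u * ∑ h', H.N u (H.inv x) h' * H.N h' x y := by
        simp only [hCdef, Finset.sum_mul, Finset.mul_sum]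
        rw [Finset.sum_comm]
        refine Finset.sum_congr rfl fun u _ => Finset.sum_congr rfl fun h' _ => by ring
      rw [hswap]
      have hstrict' : H.N (H.inv x) x H.e = 1 := by
        have := hstrict (H.inv x); rwa [H.inv_inv] at this
      have hinner : 1 ≤ ∑ h', H.N y (H.inv x) h' * H.N h' x y := by
        rw [H.assoc y (H.inv x) x y]
        have hle := Finset.single_le_sum
          (f := fun u => H.N (H.inv x) x u * H.N y u y)
          (fun u _ => mul_nonneg (H.N_nonneg _ _ _) (H.N_nonneg _ _ _))
          (Finset.mem_univ H.e)
        simpa [hstrict', H.mul_one] using hle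
      have hle2 : H.N x h y * ∑ h', H.N y (H.inv x) h' * H.N h' x y
          ≤ ∑ u, H.N x h u * ∑ h', H.N u (H.inv x) h' * H.N h' x y :=
        Finset.single_le_sum
          (f := fun u => H.N x h u * ∑ h', H.N u (H.inv x) h' * H.N h' x y)
          (fun u _ => mul_nonneg (H.N_nonneg _ _ _)
            (Finset.sum_nonneg fun h' _ =>
              mul_nonneg (H.N_nonneg _ _ _) (H.N_nonneg _ _ _)))
          (Finset.mem_univ y)
      nlinarith [hpos, hinner, hle2]
    obtain ⟨h', -, hh'⟩ := Finset.exists_lt_of_sum_lt (s := Finset.univ)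
      (f := fun _ : A => (0 : ℝ)) (g := fun h' => C h' * H.N h' x y) (by simpa using hT)
    rcases mul_pos_iff.mp hh' with ⟨hCpos, hNpos⟩ | ⟨hCneg, _⟩
    · refine ⟨h', ?_, hNpos⟩
      apply hsuper x h hS h'
      rw [H.coeff_triple, ← H.assoc x h (H.inv x) h']
      exact hCpos
    · exact absurd hCneg (not_lt.mpr (hCnn h'))
end

section
/- The su(2) level-k fusion coefficient N^{(k)ν}_{λμ} (for labels λ, μ, ν ∈ {0,1,…,k}) equals 1 if |λ−μ| ≤ ν ≤ min(λ+μ, 2k−λ−μ) and λ+μ+ν is even, and 0 otherwise. With this fusion rule, the fusion product of the middle label m = ⌊k/2⌋ with itself contains all labels ℓ of the same parity as 2m in the range 0 ≤ ℓ ≤ 2⌊k/2⌋ with ℓ ≤ min(2m, 2k−2m); in particular, for k even, m·m contains every even label 0, 2, …, k, so Com(A(su(2)_k))¹ already contains all ℤ/2-even basis elements and the conjugate pair length of the su(2)_k fusion algebra is 1. -/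
/-- The su(2) level-k fusion coefficient N^{(k)ν}_{λμ}: it equals 1 if
|λ−μ| ≤ ν ≤ min(λ+μ, 2k−λ−μ) and λ+μ+ν is even, and 0 otherwise. -/
def su2FusionCoeff (k l m n : ℕ) : ℕ :=
  if ((l : ℤ) - (m : ℤ)).natAbs ≤ n ∧ n ≤ min (l + m) (2 * k - l - m) ∧
      (l + m + n) % 2 = 0 then 1 else 0

/-- The coefficient of the label `z` in the fusion product of a list of
labels of the su(2)_k fusion algebra (the empty product being the identity 0). -/
def su2ProdCoeff (k : ℕ) : List (Fin (k + 1)) → Fin (k + 1) → ℕ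
  | [], z => if (z : ℕ) = 0 then 1 else 0
  | x :: l, z => ∑ y, su2ProdCoeff k l y * su2FusionCoeff k (x : ℕ) (y : ℕ) (z : ℕ)

/-- Com of the su(2)_k fusion algebra: labels appearing in some x·x̄ = x·x. -/
def su2Com (k : ℕ) : Set (Fin (k + 1)) :=
  {z | ∃ x : Fin (k + 1), 0 < su2FusionCoeff k (x : ℕ) (x : ℕ) (z : ℕ)}

/-- Com^L of the su(2)_k fusion algebra: labels appearing in a product of L
elements of Com. -/
def su2ComL (k L : ℕ) : Set (Fin (k + 1)) :=
  {z | ∃ l : List (Fin (k + 1)), l.length = L ∧ (∀ w ∈ l, w ∈ su2Com k) ∧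
    0 < su2ProdCoeff k l z}

/-!
For `k` even, the middle label `k / 2` fuses with itself to every even label, and a label `z`
fuses with the identity only to itself, so `Com` is exactly the set of even labels and
`Com¹ = Com`. Parity is additive under fusion, so every `Com^L` consists of even labels; and
since `0 ∈ Com`, padding `[z]` with copies of `0` shows `Com ⊆ Com^L` for every `L ≥ 1`.
-/

section FusionCoeff

variable {k l m n : ℕ}

theorem su2FusionCoeff_eq_one (h₁ : ((l : ℤ) - m).natAbs ≤ n)
    (h₂ : n ≤ min (l + m) (2 * k - l - m)) (h₃ : (l + m + n) % 2 = 0) : su2FusionCoeff k l m n = 1 :=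
  if_pos ⟨h₁, h₂, h₃⟩

theorem su2FusionCoeff_pos_iff :
    0 < su2FusionCoeff k l m n ↔
      ((l : ℤ) - m).natAbs ≤ n ∧ n ≤ min (l + m) (2 * k - l - m) ∧ (l + m + n) % 2 = 0 := by
  unfold su2FusionCoeff
  split_ifs with h
  · exact iff_of_true Nat.one_pos h
  · exact iff_of_false (lt_irrefl 0) h

theorem su2FusionCoeff_comm : su2FusionCoeff k l m n = su2FusionCoeff k m l n := by
  unfold su2FusionCoeff
  congr 1
  apply propext
  omega

theorem even_of_su2FusionCoeff_pos (h : 0 < su2FusionCoeff k l m n) : (l + m + n) % 2 = 0 :=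
  (su2FusionCoeff_pos_iff.mp h).2.2

theorem su2FusionCoeff_half_half_eq_one (h₁ : n % 2 = (2 * (k / 2)) % 2)
    (h₂ : n ≤ 2 * (k / 2)) :
    su2FusionCoeff k (k / 2) (k / 2) n = 1 :=
  su2FusionCoeff_eq_one (by simp) (by omega) (by omega)

end FusionCoeff

theorem su2FusionCoeff_zero_left (k : ℕ) (y z : Fin (k + 1)) :
    su2FusionCoeff k 0 y z = if y = z then 1 else 0 := by
  have hz := z.isLt
  split_ifs with h
  · subst h
    exact su2FusionCoeff_eq_one (by simp) (by omega) (by omega)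
  · refine Nat.eq_zero_of_not_pos fun hpos => h (Fin.ext ?_)
    have := su2FusionCoeff_pos_iff.mp hpos
    omega

theorem su2FusionCoeff_zero_right (k : ℕ) (y z : Fin (k + 1)) :
    su2FusionCoeff k y 0 z = if y = z then 1 else 0 := by
  rw [su2FusionCoeff_comm, su2FusionCoeff_zero_left]

section ProdCoeff

variable (k : ℕ)

theorem su2ProdCoeff_nil (z : Fin (k + 1)) : su2ProdCoeff k [] z = if z = 0 then 1 else 0 := by
  simp only [su2ProdCoeff, Fin.val_eq_zero_iff]

theorem su2ProdCoeff_cons (x : Fin (k + 1)) (l : List (Fin (k + 1))) (z : Fin (k + 1)) :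
    su2ProdCoeff k (x :: l) z = ∑ y, su2ProdCoeff k l y * su2FusionCoeff k x y z :=
  rfl

theorem su2ProdCoeff_singleton (x z : Fin (k + 1)) :
    su2ProdCoeff k [x] z = if x = z then 1 else 0 := by
  simp [su2ProdCoeff_cons, su2ProdCoeff_nil, ← su2FusionCoeff_zero_right k x z]

theorem su2ProdCoeff_zero_cons (l : List (Fin (k + 1))) (z : Fin (k + 1)) :
    su2ProdCoeff k (0 :: l) z = su2ProdCoeff k l z := by
  simp [su2ProdCoeff_cons, su2FusionCoeff_zero_left]

theorem su2ProdCoeff_replicate_zero_append (r : ℕ) (l : List (Fin (k + 1))) (z : Fin (k + 1)) :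
    su2ProdCoeff k (List.replicate r 0 ++ l) z = su2ProdCoeff k l z := by
  induction r with
  | zero => rfl
  | succ r ih => rw [List.replicate_succ, List.cons_append, su2ProdCoeff_zero_cons, ih]

theorem even_of_su2ProdCoeff_pos {l : List (Fin (k + 1))} (hl : ∀ w ∈ l, (w : ℕ) % 2 = 0)
    {z : Fin (k + 1)} (hz : 0 < su2ProdCoeff k l z) : (z : ℕ) % 2 = 0 := by
  induction l generalizing z with
  | nil =>
    rw [su2ProdCoeff_nil] at hz
    split_ifs at hz with h
    · simp [h]
    · exact absurd hz (lt_irrefl 0)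
  | cons x l ih =>
    rw [su2ProdCoeff_cons] at hz
    obtain ⟨y, -, hy⟩ := Finset.exists_ne_zero_of_sum_ne_zero hz.ne'
    obtain ⟨hly, hxyz⟩ := mul_ne_zero_iff.mp hy
    have hx := hl x List.mem_cons_self
    have hy' := ih (fun w hw => hl w (List.mem_cons_of_mem x hw)) (Nat.pos_of_ne_zero hly)
    have := even_of_su2FusionCoeff_pos (Nat.pos_of_ne_zero hxyz)
    omega

end ProdCoeff

section Com

variable {k : ℕ}

theorem even_of_mem_su2Com {z : Fin (k + 1)} (hz : z ∈ su2Com k) : (z : ℕ) % 2 = 0 := by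
  obtain ⟨x, hx⟩ := hz
  have := even_of_su2FusionCoeff_pos hx
  omega

theorem mem_su2Com_of_even (hk : Even k) {z : Fin (k + 1)} (hz : (z : ℕ) % 2 = 0) :
    z ∈ su2Com k := by
  have hz' := z.isLt
  obtain ⟨j, rfl⟩ := hk
  refine ⟨⟨j, by omega⟩, ?_⟩
  show 0 < su2FusionCoeff (j + j) j j z
  rw [su2FusionCoeff_eq_one (by simp) (by omega) (by omega)]
  exact Nat.one_pos

theorem su2ComL_one (k : ℕ) : su2ComL k 1 = su2Com k := by
  ext z
  constructor
  · rintro ⟨l, hlen, hcom, hpos⟩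
    obtain ⟨x, rfl⟩ := List.length_eq_one_iff.mp hlen
    rw [su2ProdCoeff_singleton] at hpos
    split_ifs at hpos with h
    · exact h ▸ hcom x (List.mem_singleton_self x)
    · exact absurd hpos (lt_irrefl 0)
  · intro hz
    refine ⟨[z], rfl, by simpa using hz, ?_⟩
    simp [su2ProdCoeff_singleton]

theorem zero_mem_su2Com (k : ℕ) : (0 : Fin (k + 1)) ∈ su2Com k :=
  ⟨0, by rw [su2FusionCoeff_eq_one] <;> simp⟩

theorem su2Com_subset_su2ComL {L : ℕ} (hL : 1 ≤ L) : su2Com k ⊆ su2ComL k L := by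
  intro z hz
  refine ⟨List.replicate (L - 1) 0 ++ [z], by simp; omega, ?_, ?_⟩
  · intro w hw
    rcases List.mem_append.mp hw with h | h
    · exact List.eq_of_mem_replicate h ▸ zero_mem_su2Com k
    · exact List.mem_singleton.mp h ▸ hz
  · simp [su2ProdCoeff_replicate_zero_append, su2ProdCoeff_singleton]

theorem even_of_mem_su2ComL {L : ℕ} {z : Fin (k + 1)} (hz : z ∈ su2ComL k L) :
    (z : ℕ) % 2 = 0 := by
  obtain ⟨l, -, hcom, hpos⟩ := hz
  exact even_of_su2ProdCoeff_pos k (fun w hw => even_of_mem_su2Com (hcom w hw)) hpos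

theorem su2ComL_eq_su2Com (hk : Even k) {L : ℕ} (hL : 1 ≤ L) : su2ComL k L = su2Com k :=
  Set.Subset.antisymm (fun _ hz => mem_su2Com_of_even hk (even_of_mem_su2ComL hz))
    (su2Com_subset_su2ComL hL)

end Com

/-- The fusion square of the middle label m = ⌊k/2⌋ of su(2)_k contains all
labels ℓ of the same parity as 2m with 0 ≤ ℓ ≤ 2⌊k/2⌋ and
ℓ ≤ min(2m, 2k−2m); in particular, for k even, Com(A(su(2)_k))¹ already
contains all ℤ/2-even basis elements and the conjugate pair length of the
su(2)_k fusion algebra is 1. -/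
theorem stmt_19 (k : ℕ) :
    (∀ ℓ : ℕ, ℓ % 2 = (2 * (k / 2)) % 2 → ℓ ≤ 2 * (k / 2) →
      ℓ ≤ min (2 * (k / 2)) (2 * k - 2 * (k / 2)) →
      su2FusionCoeff k (k / 2) (k / 2) ℓ = 1) ∧
    (Even k →
      (∀ z : Fin (k + 1), (z : ℕ) % 2 = 0 → z ∈ su2ComL k 1) ∧
      ∀ L : ℕ, 1 ≤ L → su2ComL k L = su2ComL k 1) := by
  refine ⟨fun _ h₁ h₂ _ => su2FusionCoeff_half_half_eq_one h₁ h₂, fun hk => ⟨?_, ?_⟩⟩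
  · intro z hz
    rw [su2ComL_one]
    exact mem_su2Com_of_even hk hz
  · intro L hL
    rw [su2ComL_eq_su2Com hk hL, su2ComL_one]
end
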